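/- Let φ : [0,∞) → [0,∞) be continuous and integrable with ‖φ‖₁ := ∫₀^∞ φ < 1, let ψ := Σ_{k=1}^∞ φ^{*k}, and let κ, v > 0. Define ζ(t) := κ v (1 + ∫_t^∞ ψ(u) du − ∫_t^∞ ∫₀^t ψ(u−s) φ(s) ds du). Then ζ is differentiable on (0,∞) and ζ′(t) = −κ v (1 + ‖ψ‖₁) φ(t) = −ζ(0) φ(t) for every t > 0, where ‖ψ‖₁ = ∫₀^∞ ψ. -/

import Mathlib

/-! The resolvent `ψ = ∑_{k ≥ 1} φ^{*k}` converges pointwise because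
`φ^{*(k+1)}(t) ≤ (max_{[0,t]} φ) ‖φ‖₁^k`, is integrable, and solves the renewal equation
`ψ = φ + ψ ⋆ φ`. Integrating the renewal equation over `[t, ∞)` splits the double integral
of `ψ(u - s) φ(s)` over `u ≥ t` according to `s ≤ t` or `s > t`: the first part is the term
subtracted in `ζ`, the second is `‖ψ‖₁ ∫_t^∞ φ` by Fubini. Hence
`ζ(t) = κv (1 + (1 + ‖ψ‖₁) ∫_t^∞ φ)` for `t ≥ 0`, and `ζ'(t) = -κv (1 + ‖ψ‖₁) φ(t)`. -/

open MeasureTheory Filter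

/-- Causal convolution of two functions supported on `[0,∞)`:
`(f * g)(t) = ∫₀^t f(t−s) g(s) ds`. -/
noncomputable def causalConv (f g : ℝ → ℝ) : ℝ → ℝ :=
  fun t => ∫ s in (0:ℝ)..t, f (t - s) * g s

/-- `convPow φ k` is the `(k+1)`-st convolution power `φ^{*(k+1)}` of `φ`. -/
noncomputable def convPow (φ : ℝ → ℝ) : ℕ → ℝ → ℝ
  | 0 => φ
  | k + 1 => causalConv φ (convPow φ k)

open Set
open scoped Convolution

lemma integrable_tsum_of_nonneg {α : Type*} [MeasurableSpace α] {μ : Measure α}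
    {f : ℕ → α → ℝ} (hf : ∀ k, Integrable (f k) μ) (hf0 : ∀ k x, 0 ≤ f k x)
    (hsum : ∀ x, Summable (f · x)) (hint : Summable fun k => ∫ x, f k x ∂μ) :
    Integrable (fun x => ∑' k, f k x) μ := by
  have hofReal (x : α) : ENNReal.ofReal (∑' k, f k x) = ∑' k, ENNReal.ofReal (f k x) :=
    ENNReal.ofReal_tsum_of_nonneg (hf0 · x) (hsum x)
  have hmeas (k : ℕ) : AEMeasurable (fun x => ENNReal.ofReal (f k x)) μ :=
    (hf k).aemeasurable.ennreal_ofReal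
  refine ⟨(AEMeasurable.tsum fun k => (hf k).aemeasurable).aestronglyMeasurable, ?_⟩
  rw [hasFiniteIntegral_iff_ofReal (Eventually.of_forall fun x => tsum_nonneg (hf0 · x))]
  calc ∫⁻ x, ENNReal.ofReal (∑' k, f k x) ∂μ
      = ∑' k, ∫⁻ x, ENNReal.ofReal (f k x) ∂μ := by
        simp_rw [hofReal]; exact lintegral_tsum hmeas
    _ = ENNReal.ofReal (∑' k, ∫ x, f k x ∂μ) := by
        rw [ENNReal.ofReal_tsum_of_nonneg (fun k => integral_nonneg (hf0 k)) hint]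
        congr with k
        exact (ofReal_integral_eq_lintegral_ofReal (hf k) (.of_forall (hf0 k))).symm
    _ < ⊤ := ENNReal.ofReal_lt_top

lemma hasDerivAt_setIntegral_Ici {f : ℝ → ℝ} (hf : Continuous f) (hfi : Integrable f)
    (t : ℝ) : HasDerivAt (fun x => ∫ u in Ici x, f u) (-f t) t := by
  have hsplit :
      (fun x => ∫ u in Ici x, f u) = fun x => (∫ u in Ioi t, f u) - ∫ u in t..x, f u := by
    funext x
    rw [integral_Ici_eq_integral_Ioi,
      ← intervalIntegral.integral_Ioi_sub_Ioi' hfi.integrableOn hfi.integrableOn, sub_sub_cancel]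
  rw [hsplit]
  exact (intervalIntegral.integral_hasDerivAt_right hfi.intervalIntegrable
    (hf.stronglyMeasurableAtFilter _ _) hf.continuousAt).const_sub _

lemma intervalIntegral_eq_setIntegral_Iic {g : ℝ → ℝ} (hg : ∀ s, s < 0 → g s = 0)
    {t : ℝ} (ht : 0 ≤ t) : ∫ s in (0:ℝ)..t, g s = ∫ s in Iic t, g s := by
  rw [intervalIntegral.integral_of_le ht, ← integral_Icc_eq_integral_Ioc,
    setIntegral_eq_of_subset_of_forall_sdiff_eq_zero measurableSet_Iic Icc_subset_Iic_self]
  exact fun s hs => hg s (not_le.mp fun h => hs.2 ⟨h, hs.1⟩)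

lemma setIntegral_Ici_comp_sub_eq_integral {g : ℝ → ℝ} (hg : ∀ s, s < 0 → g s = 0)
    {t s : ℝ} (hts : t ≤ s) : ∫ u in Ici t, g (u - s) = ∫ u, g u := by
  rw [setIntegral_eq_integral_of_forall_compl_eq_zero fun u hu => hg _ (by
    simp only [mem_Ici, not_le] at hu; linarith), integral_sub_right_eq_self]

section CausalConv

variable {f g : ℝ → ℝ}

lemma comp_sub_mul_eq_zero_of_notMem_Icc (hf : ∀ t, t < 0 → f t = 0)
    (hg : ∀ t, t < 0 → g t = 0) {t s : ℝ} (hs : s ∉ Icc 0 t) : f (t - s) * g s = 0 := by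
  rcases lt_or_ge s 0 with hs0 | hs0
  · rw [hg s hs0, mul_zero]
  · rw [hf (t - s) (by by_contra! h; exact hs ⟨hs0, by linarith⟩), zero_mul]

lemma causalConv_eq_integral (hf : ∀ t, t < 0 → f t = 0) (hg : ∀ t, t < 0 → g t = 0)
    (t : ℝ) : causalConv f g t = ∫ s, f (t - s) * g s := by
  rcases le_or_gt 0 t with ht | ht
  · rw [causalConv, intervalIntegral.integral_of_le ht, ← integral_Icc_eq_integral_Ioc,
      setIntegral_eq_integral_of_forall_compl_eq_zero
        fun s hs => comp_sub_mul_eq_zero_of_notMem_Icc hf hg hs]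
  · have hzero (s : ℝ) : f (t - s) * g s = 0 :=
      comp_sub_mul_eq_zero_of_notMem_Icc hf hg fun hs => by linarith [hs.1, hs.2]
    simp [causalConv, hzero]

lemma causalConv_eq_convolution (hf : ∀ t, t < 0 → f t = 0) (hg : ∀ t, t < 0 → g t = 0) :
    causalConv f g = f ⋆[ContinuousLinearMap.mul ℝ ℝ] g := by
  funext t
  rw [causalConv_eq_integral hf hg, convolution_eq_swap]
  rfl

lemma causalConv_of_neg (hf : ∀ t, t < 0 → f t = 0) (hg : ∀ t, t < 0 → g t = 0) {t : ℝ}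
    (ht : t < 0) : causalConv f g t = 0 := by
  rw [causalConv_eq_integral hf hg]
  exact integral_eq_zero_of_ae (.of_forall fun s =>
    comp_sub_mul_eq_zero_of_notMem_Icc hf hg fun hs => by linarith [hs.1, hs.2])

lemma causalConv_nonneg (hf0 : ∀ t, 0 ≤ f t) (hg0 : ∀ t, 0 ≤ g t)
    (hf : ∀ t, t < 0 → f t = 0) (hg : ∀ t, t < 0 → g t = 0) (t : ℝ) :
    0 ≤ causalConv f g t := by
  rw [causalConv_eq_integral hf hg]
  exact integral_nonneg fun s => mul_nonneg (hf0 _) (hg0 _)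

lemma integrable_causalConv (hf : ∀ t, t < 0 → f t = 0) (hg : ∀ t, t < 0 → g t = 0)
    (hfi : Integrable f) (hgi : Integrable g) : Integrable (causalConv f g) := by
  rw [causalConv_eq_convolution hf hg]
  exact hfi.integrable_convolution _ hgi

lemma integral_causalConv (hf : ∀ t, t < 0 → f t = 0) (hg : ∀ t, t < 0 → g t = 0)
    (hfi : Integrable f) (hgi : Integrable g) :
    ∫ t, causalConv f g t = (∫ t, f t) * ∫ t, g t := by
  rw [causalConv_eq_convolution hf hg, integral_convolution _ hfi hgi]
  rfl

lemma integrable_comp_sub_mul (hfc : Continuous f) (hf : ∀ t, t < 0 → f t = 0)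
    (hg : ∀ t, t < 0 → g t = 0) (hgi : Integrable g) (t : ℝ) :
    Integrable fun s => f (t - s) * g s :=
  (hgi.integrableOn.continuousOn_mul (hfc.comp (continuous_sub_left t)).continuousOn
    isCompact_Icc).integrable_of_forall_notMem_eq_zero
      fun _ hs => comp_sub_mul_eq_zero_of_notMem_Icc hf hg hs

lemma causalConv_le_mul_integral (hfc : Continuous f) (hf : ∀ t, t < 0 → f t = 0)
    (hg0 : ∀ t, 0 ≤ g t) (hg : ∀ t, t < 0 → g t = 0) (hgi : Integrable g) {t M : ℝ}
    (hM : ∀ x ≤ t, f x ≤ M) : causalConv f g t ≤ M * ∫ s, g s := by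
  rw [causalConv_eq_integral hf hg, ← integral_const_mul]
  refine integral_mono (integrable_comp_sub_mul hfc hf hg hgi t) (hgi.const_mul M) fun s => ?_
  rcases lt_or_ge s 0 with hs | hs
  · simp [hg s hs]
  · exact mul_le_mul_of_nonneg_right (hM _ (by linarith)) (hg0 s)

end CausalConv

section ConvPow

variable {φ : ℝ → ℝ}

lemma convPow_of_neg (hφ : ∀ t, t < 0 → φ t = 0) : ∀ k t, t < 0 → convPow φ k t = 0
  | 0, t, ht => hφ t ht
  | k + 1, _, ht => causalConv_of_neg hφ (convPow_of_neg hφ k) ht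

lemma convPow_nonneg (hφ0 : ∀ t, 0 ≤ φ t) (hφ : ∀ t, t < 0 → φ t = 0) :
    ∀ k t, 0 ≤ convPow φ k t
  | 0 => hφ0
  | k + 1 => causalConv_nonneg hφ0 (convPow_nonneg hφ0 hφ k) hφ (convPow_of_neg hφ k)

lemma integrable_convPow (hφ : ∀ t, t < 0 → φ t = 0) (hφi : Integrable φ) :
    ∀ k, Integrable (convPow φ k)
  | 0 => hφi
  | k + 1 => integrable_causalConv hφ (convPow_of_neg hφ k) hφi (integrable_convPow hφ hφi k)

lemma integral_convPow (hφ : ∀ t, t < 0 → φ t = 0) (hφi : Integrable φ) :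
    ∀ k, ∫ t, convPow φ k t = (∫ t, φ t) ^ (k + 1)
  | 0 => by simp [convPow]
  | k + 1 => by
    rw [convPow,
      integral_causalConv hφ (convPow_of_neg hφ k) hφi (integrable_convPow hφ hφi k),
      integral_convPow hφ hφi k, pow_succ' _ (k + 1)]

lemma bddAbove_image_Iic (hφc : Continuous φ) (hφ : ∀ t, t < 0 → φ t = 0) (t : ℝ) :
    BddAbove (φ '' Iic t) := by
  obtain ⟨M, hM⟩ := (isCompact_Icc (a := 0) (b := t)).bddAbove_image hφc.continuousOn
  refine ⟨max M 0, ?_⟩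
  rintro _ ⟨x, hx, rfl⟩
  rcases lt_or_ge x 0 with hx0 | hx0
  · exact (hφ x hx0).trans_le (le_max_right _ _)
  · exact (hM (mem_image_of_mem φ ⟨hx0, hx⟩)).trans (le_max_left _ _)

lemma summable_convPow (hφc : Continuous φ) (hφ0 : ∀ t, 0 ≤ φ t)
    (hφ : ∀ t, t < 0 → φ t = 0) (hφi : Integrable φ) (hφ1 : ∫ t, φ t < 1) (t : ℝ) :
    Summable fun k => convPow φ k t := by
  obtain ⟨M, hM⟩ := bddAbove_image_Iic hφc hφ t
  have hgeom : Summable fun k : ℕ => M * (∫ t, φ t) ^ (k + 1) := by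
    simpa [pow_succ, mul_assoc] using ((summable_geometric_of_lt_one
      (integral_nonneg hφ0) hφ1).mul_right (∫ t, φ t)).mul_left M
  refine (summable_nat_add_iff 1).mp
    (hgeom.of_nonneg_of_le (fun k => convPow_nonneg hφ0 hφ _ t) fun k => ?_)
  rw [convPow, ← integral_convPow hφ hφi k]
  exact causalConv_le_mul_integral hφc hφ (convPow_nonneg hφ0 hφ k) (convPow_of_neg hφ k)
    (integrable_convPow hφ hφi k) fun x hx => hM (mem_image_of_mem φ hx)

end ConvPow

noncomputable def resolventKernel (φ : ℝ → ℝ) (t : ℝ) : ℝ := ∑' k, convPow φ k t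

section ResolventKernel

variable {φ : ℝ → ℝ}

lemma resolventKernel_of_neg (hφ : ∀ t, t < 0 → φ t = 0) (t : ℝ) (ht : t < 0) :
    resolventKernel φ t = 0 := by
  simp [resolventKernel, convPow_of_neg hφ _ t ht]

lemma integrable_resolventKernel (hφc : Continuous φ) (hφ0 : ∀ t, 0 ≤ φ t)
    (hφ : ∀ t, t < 0 → φ t = 0) (hφi : Integrable φ) (hφ1 : ∫ t, φ t < 1) :
    Integrable (resolventKernel φ) := by
  refine integrable_tsum_of_nonneg (integrable_convPow hφ hφi) (convPow_nonneg hφ0 hφ)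
    (summable_convPow hφc hφ0 hφ hφi hφ1) ?_
  simpa [integral_convPow hφ hφi, pow_succ] using
    (summable_geometric_of_lt_one (integral_nonneg hφ0) hφ1).mul_right (∫ t, φ t)

lemma resolventKernel_eq_add_integral (hφc : Continuous φ) (hφ0 : ∀ t, 0 ≤ φ t)
    (hφ : ∀ t, t < 0 → φ t = 0) (hφi : Integrable φ) (hφ1 : ∫ t, φ t < 1) (t : ℝ) :
    resolventKernel φ t = φ t + ∫ s, resolventKernel φ (t - s) * φ s := by
  have hsum := summable_convPow hφc hφ0 hφ hφi hφ1
  have hint (k : ℕ) := integrable_comp_sub_mul hφc hφ (convPow_of_neg hφ k)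
    (integrable_convPow hφ hφi k) t
  have hconv (k : ℕ) : ∫ s, φ (t - s) * convPow φ k s = convPow φ (k + 1) t :=
    (causalConv_eq_integral hφ (convPow_of_neg hφ k) t).symm
  calc resolventKernel φ t = φ t + ∑' k, convPow φ (k + 1) t := (hsum t).tsum_eq_zero_add
    _ = φ t + ∫ s, φ (t - s) * resolventKernel φ s := by
        simp_rw [resolventKernel, ← tsum_mul_left, ← hconv]
        refine congrArg _ (integral_tsum_of_summable_integral_norm hint
          (((summable_nat_add_iff 1).mpr (hsum t)).congr fun k => ?_))
        rw [← hconv]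
        exact integral_congr_ae (.of_forall fun s =>
          (Real.norm_of_nonneg (mul_nonneg (hφ0 _) (convPow_nonneg hφ0 hφ k s))).symm)
    _ = φ t + ∫ s, resolventKernel φ (t - s) * φ s := by
        rw [← integral_sub_left_eq_self _ volume t]
        simp_rw [sub_sub_cancel, mul_comm]

end ResolventKernel

theorem setIntegral_Ici_sub_setIntegral_Ici_intervalIntegral {φ ψ : ℝ → ℝ}
    (hφ : ∀ t, t < 0 → φ t = 0) (hψ : ∀ t, t < 0 → ψ t = 0) (hφi : Integrable φ)
    (hψi : Integrable ψ) (hren : ∀ u, ψ u = φ u + ∫ s, ψ (u - s) * φ s) {t : ℝ}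
    (ht : 0 ≤ t) :
    (∫ u in Ici t, ψ u) - ∫ u in Ici t, ∫ s in (0:ℝ)..t, ψ (u - s) * φ s
      = (1 + ∫ u, ψ u) * ∫ u in Ici t, φ u := by
  set F : ℝ × ℝ → ℝ := fun p => ψ (p.1 - p.2) * φ p.2
  have hF : Integrable F :=
    (hφi.convolution_integrand (ContinuousLinearMap.mul ℝ ℝ) hψi).congr
      (.of_forall fun p => mul_comm _ _)
  have hrenewal : ∫ u in Ici t, ψ u = (∫ u in Ici t, φ u) + ∫ p in Ici t ×ˢ univ, F p := by
    rw [Measure.volume_eq_prod, setIntegral_prod _ hF.integrableOn, Measure.restrict_univ,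
      ← integral_add hφi.integrableOn hF.integral_prod_left.integrableOn]
    exact setIntegral_congr_fun measurableSet_Ici fun u _ => hren u
  have hsplit : ∫ p in Ici t ×ˢ univ, F p
      = (∫ p in Ici t ×ˢ Iic t, F p) + ∫ p in Ici t ×ˢ Ioi t, F p := by
    rw [← Iic_union_Ioi (a := t), prod_union, setIntegral_union
      (disjoint_prod.2 (.inr (Iic_disjoint_Ioi le_rfl))) (measurableSet_Ici.prod measurableSet_Ioi)
      hF.integrableOn hF.integrableOn]
  have hpast : ∫ p in Ici t ×ˢ Iic t, F p
      = ∫ u in Ici t, ∫ s in (0:ℝ)..t, ψ (u - s) * φ s := by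
    rw [Measure.volume_eq_prod, setIntegral_prod _ hF.integrableOn]
    refine setIntegral_congr_fun measurableSet_Ici fun u _ => ?_
    exact (intervalIntegral_eq_setIntegral_Iic (fun s hs => by simp [F, hφ s hs]) ht).symm
  have hfuture : ∫ p in Ici t ×ˢ Ioi t, F p = (∫ u, ψ u) * ∫ u in Ici t, φ u := by
    rw [Measure.volume_eq_prod, ← setIntegral_prod_swap,
      setIntegral_prod (fun p => F p.swap) hF.swap.integrableOn,
      integral_Ici_eq_integral_Ioi, ← integral_const_mul]
    refine setIntegral_congr_fun measurableSet_Ioi fun s hs => ?_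
    simp only [F, Prod.swap, integral_mul_const, setIntegral_Ici_comp_sub_eq_integral hψ hs.le]
  rw [hrenewal, hsplit, hpast, hfuture]
  ring

theorem propagator_kernel_derivative_general
    (φ : ℝ → ℝ) (κ v : ℝ)
    (hφcont : Continuous φ)
    (hφpos : ∀ t : ℝ, 0 ≤ φ t)
    (hφsupp : ∀ t : ℝ, t < 0 → φ t = 0)
    (hφint : IntegrableOn φ (Set.Ici (0:ℝ)))
    (hφnorm : ∫ t in Set.Ici (0:ℝ), φ t < 1)
    (ψ : ℝ → ℝ)
    (hψ : ∀ t : ℝ, ψ t = ∑' k : ℕ, convPow φ k t)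
    (ζ : ℝ → ℝ)
    (hζ : ∀ t : ℝ, ζ t = κ * v *
      (1 + (∫ u in Set.Ici t, ψ u)
        - ∫ u in Set.Ici t, ∫ s in (0:ℝ)..t, ψ (u - s) * φ s)) :
    (∀ t : ℝ, 0 < t →
      HasDerivAt ζ (-(κ * v * (1 + ∫ u in Set.Ici (0:ℝ), ψ u) * φ t)) t) ∧
    κ * v * (1 + ∫ u in Set.Ici (0:ℝ), ψ u) = ζ 0 := by
  obtain rfl : ψ = resolventKernel φ := funext hψ
  have hφi : Integrable φ :=
    hφint.integrable_of_forall_notMem_eq_zero fun t ht => hφsupp t (not_le.mp ht)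
  have hφ1 : ∫ t, φ t < 1 := by
    rwa [setIntegral_eq_integral_of_forall_compl_eq_zero (s := Ici 0)
      fun t ht => hφsupp t (not_le.mp ht)] at hφnorm
  have hψs := resolventKernel_of_neg hφsupp
  have hψ0 : ∫ u in Ici 0, resolventKernel φ u = ∫ u, resolventKernel φ u :=
    setIntegral_eq_integral_of_forall_compl_eq_zero fun t ht => hψs t (not_le.mp ht)
  have hζtail (t : ℝ) (ht : 0 ≤ t) :
      ζ t = κ * v * (1 + (1 + ∫ u, resolventKernel φ u) * ∫ u in Ici t, φ u) := by
    rw [hζ, add_sub_assoc,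
      setIntegral_Ici_sub_setIntegral_Ici_intervalIntegral hφsupp hψs hφi
      (integrable_resolventKernel hφcont hφpos hφsupp hφi hφ1)
      (resolventKernel_eq_add_integral hφcont hφpos hφsupp hφi hφ1) ht]
  refine ⟨fun t ht => ?_, by simp [hζ]⟩
  rw [hψ0]
  refine ((((hasDerivAt_setIntegral_Ici hφcont hφi t).const_mul
    (1 + ∫ u, resolventKernel φ u)).const_add 1).const_mul
    (κ * v) |>.congr_of_eventuallyEq ?_).congr_deriv (by ring)
  filter_upwards [Ioi_mem_nhds ht] with x hx using hζtail x hx.le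

/-- the propagator kernel
`ζ(t) = κv(1 + ∫_t^∞ ψ − ∫_t^∞ ∫₀^t ψ(u−s)φ(s) ds du)` is differentiable on `(0,∞)`
with `ζ′(t) = −κv(1+‖ψ‖₁)φ(t) = −ζ(0)φ(t)`: the martingale condition of the
Hawkes-driven propagator price model. -/
theorem propagator_kernel_derivative
    (φ : ℝ → ℝ) (κ v : ℝ) (hκ : 0 < κ) (hv : 0 < v)
    (hφcont : Continuous φ)
    (hφpos : ∀ t : ℝ, 0 ≤ φ t)
    (hφsupp : ∀ t : ℝ, t < 0 → φ t = 0)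
    (hφint : IntegrableOn φ (Set.Ici (0:ℝ)))
    (hφnorm : ∫ t in Set.Ici (0:ℝ), φ t < 1)
    (ψ : ℝ → ℝ)
    (hψ : ∀ t : ℝ, ψ t = ∑' k : ℕ, convPow φ k t)
    (ζ : ℝ → ℝ)
    (hζ : ∀ t : ℝ, ζ t = κ * v *
      (1 + (∫ u in Set.Ici t, ψ u)
        - ∫ u in Set.Ici t, ∫ s in (0:ℝ)..t, ψ (u - s) * φ s)) :
    (∀ t : ℝ, 0 < t →
      HasDerivAt ζ (-(κ * v * (1 + ∫ u in Set.Ici (0:ℝ), ψ u) * φ t)) t) ∧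
    κ * v * (1 + ∫ u in Set.Ici (0:ℝ), ψ u) = ζ 0 :=
  propagator_kernel_derivative_general φ κ v hφcont hφpos hφsupp hφint hφnorm ψ hψ ζ hζ
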